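/- arXiv:2005.11866 — 2 statements merged into one kernel-verified Lean document; each statement's English description precedes it below -/
import Mathlib

section
/- Let Λ ≥ 1 and let 0 ≤ a₁ ≤ a₂ ≤ a₃ and b₁, b₃ ≥ 0 be real numbers satisfying a₃ ≤ Λ(a₁ + a₂) and b₃ ≤ Λ(a₁ + a₂). Then a₃² + b₃² + 2a₁a₂ − (6Λ² + 1)(a₁² + b₁² + 2a₂a₃) ≤ −a₃². -/
/-- Key algebraic inequality in the 4-dimensional pinching lemma: if `Λ ≥ 1`,
`0 ≤ a₁ ≤ a₂ ≤ a₃`, `b₁, b₃ ≥ 0`, `a₃ ≤ Λ(a₁+a₂)` and `b₃ ≤ Λ(a₁+a₂)`, then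
`a₃² + b₃² + 2a₁a₂ − (6Λ²+1)(a₁² + b₁² + 2a₂a₃) ≤ −a₃²`. -/
theorem stmt3 (Λ a₁ a₂ a₃ b₁ b₃ : ℝ) (hΛ : 1 ≤ Λ)
    (h0 : 0 ≤ a₁) (h1 : a₁ ≤ a₂) (h2 : a₂ ≤ a₃)
    (hb1 : 0 ≤ b₁) (hb3 : 0 ≤ b₃)
    (ha : a₃ ≤ Λ * (a₁ + a₂)) (hb : b₃ ≤ Λ * (a₁ + a₂)) :
    a₃ ^ 2 + b₃ ^ 2 + 2 * a₁ * a₂ - (6 * Λ ^ 2 + 1) * (a₁ ^ 2 + b₁ ^ 2 + 2 * a₂ * a₃)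
      ≤ -a₃ ^ 2 := by
  have hsum : 0 ≤ a₁ + a₂ := by linarith
  have hΛ0 : (0:ℝ) ≤ Λ := by linarith
  have ha3 : a₃ ^ 2 ≤ Λ ^ 2 * (a₁ + a₂) ^ 2 := by nlinarith [sq_nonneg (Λ*(a₁+a₂) - a₃)]
  have hb3' : b₃ ^ 2 ≤ Λ ^ 2 * (a₁ + a₂) ^ 2 := by nlinarith [sq_nonneg (Λ*(a₁+a₂) - b₃)]
  have hsq : (a₁ + a₂) ^ 2 ≤ 4 * a₂ * a₃ := by nlinarith [sq_nonneg (a₂ - a₁), mul_nonneg h0 (by linarith : (0:ℝ) ≤ a₃ - a₂)]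
  have h2a : 2 * a₁ * a₂ ≤ 2 * a₂ * a₃ := by nlinarith
  have hL2 : (1:ℝ) ≤ Λ ^ 2 := by nlinarith
  nlinarith [sq_nonneg b₁, sq_nonneg a₁, mul_nonneg (sq_nonneg Λ) (by linarith : (0:ℝ) ≤ 4*a₂*a₃ - (a₁+a₂)^2)]
end

section
/- Let n ≥ 5 and let r₁ ≤ r₂ ≤ ... ≤ r_n be real numbers with R = r₁ + ... + r_n > 0. Suppose r_i ≥ −R/(n−4) for all i and R − 2r_n ≥ 0. Then r₁² + r₂² + ... + r_n² ≤ n·R². -/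
open Finset

/-- Eigenvalue estimate `|Ric|² ≤ n R²`: if `n ≥ 5`, `r₁ ≤ ⋯ ≤ rₙ` with
`R = ∑ rᵢ > 0`, `rᵢ ≥ −R/(n−4)` for all `i`, and `R − 2 rₙ ≥ 0`, then
`∑ rᵢ² ≤ n R²`. -/
theorem stmt11 (m : ℕ) (hm : 5 ≤ m + 1) (r : Fin (m + 1) → ℝ)
    (hmono : ∀ i j : Fin (m + 1), i ≤ j → r i ≤ r j)
    (R : ℝ) (hR : R = ∑ i, r i) (hRpos : 0 < R)
    (hlow : ∀ i, -(R / ((m + 1 : ℕ) - 4)) ≤ r i)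
    (htop : 0 ≤ R - 2 * r (Fin.last m)) :
    ∑ i, r i ^ 2 ≤ (m + 1 : ℕ) * R ^ 2 := by
  have h5 : (5:ℝ) ≤ ((m+1:ℕ):ℝ) := by exact_mod_cast hm
  have h1 : (1:ℝ) ≤ ((m+1:ℕ):ℝ) - 4 := by linarith
  have hub : ∀ i, r i ≤ R := fun i =>
    le_trans (hmono i (Fin.last m) (Fin.le_last i)) (by linarith)
  have hlb : ∀ i, -R ≤ r i := by
    intro i
    refine le_trans ?_ (hlow i)
    have : R / (((m+1:ℕ):ℝ) - 4) ≤ R := div_le_self hRpos.le h1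
    linarith
  have hsq : ∀ i ∈ Finset.univ, r i ^ 2 ≤ R ^ 2 := fun i _ =>
    sq_le_sq' (hlb i) (hub i)
  calc ∑ i, r i ^ 2 ≤ ∑ _i : Fin (m+1), R ^ 2 := Finset.sum_le_sum hsq
    _ = (m+1:ℕ) * R ^ 2 := by simp [Finset.sum_const, mul_comm]
end
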